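/- Let A and B be Poisson algebras, each of which is (strongly) Poisson cancellative. Then the direct sum Poisson algebra A ⊕ B is (strongly) Poisson cancellative. -/

import Mathlib

/-- A Poisson structure on a commutative `k`-algebra `A`: a bilinear bracket making `A`
a Lie algebra such that `{a, -}` is a derivation for every `a`. -/
structure PoissonStructure (k A : Type*) [CommRing k] [CommRing A] [Algebra k A] where
  bracket : A → A → A
  add_left : ∀ a b c : A, bracket (a + b) c = bracket a c + bracket b c
  smul_left : ∀ (r : k) (a b : A), bracket (r • a) b = r • bracket a b
  antisymm : ∀ a b : A, bracket a b = - bracket b a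
  jacobi : ∀ a b c : A,
    bracket a (bracket b c) = bracket (bracket a b) c + bracket b (bracket a c)
  leibniz : ∀ a b c : A, bracket a (b * c) = bracket a b * c + b * bracket a c

noncomputable def mvBracketFun {σ A : Type*} [CommRing A] (br : A → A → A)
    (p q : MvPolynomial σ A) : MvPolynomial σ A :=
  ∑ m ∈ p.support, ∑ m' ∈ q.support,
    MvPolynomial.monomial (m + m') (br (MvPolynomial.coeff m p) (MvPolynomial.coeff m' q))

universe u

namespace PoissonStructure

variable {k A : Type*} [CommRing k] [CommRing A] [Algebra k A] (P : PoissonStructure k A)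

lemma zero_left (c : A) : P.bracket 0 c = 0 := by
  have := P.add_left 0 0 c
  rw [add_zero] at this
  exact (left_eq_add.mp this)

lemma zero_right (c : A) : P.bracket c 0 = 0 := by
  rw [P.antisymm, P.zero_left, neg_zero]

lemma sub_left (a b c : A) : P.bracket (a - b) c = P.bracket a c - P.bracket b c := by
  have := P.add_left (a - b) b c
  rw [sub_add_cancel] at this
  exact eq_sub_of_add_eq this.symm

lemma sub_right (a b c : A) : P.bracket a (b - c) = P.bracket a b - P.bracket a c := by
  rw [P.antisymm a, P.sub_left, P.antisymm b a, P.antisymm c a]; ring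

lemma one_right (a : A) : P.bracket a 1 = 0 := by
  have := P.leibniz a 1 1
  simp only [mul_one, one_mul] at this
  exact (left_eq_add.mp this)

lemma one_left (a : A) : P.bracket 1 a = 0 := by
  rw [P.antisymm, P.one_right, neg_zero]

lemma mul_left (a b c : A) : P.bracket (a * b) c = P.bracket a c * b + a * P.bracket b c := by
  rw [P.antisymm, P.leibniz, P.antisymm c a, P.antisymm c b]; ring

/-- Push a Poisson structure forward along a surjective algebra hom. -/
def pushforward {S : Type*} [CommRing S] [Algebra k S]
    (f : A →ₐ[k] S) (hf : Function.Surjective f) (br : S → S → S)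
    (hbr : ∀ x y, br (f x) (f y) = f (P.bracket x y)) : PoissonStructure k S where
  bracket := br
  add_left a b c := by
    obtain ⟨a, rfl⟩ := hf a; obtain ⟨b, rfl⟩ := hf b; obtain ⟨c, rfl⟩ := hf c
    rw [← map_add, hbr, hbr, hbr, ← map_add, P.add_left]
  smul_left r a b := by
    obtain ⟨a, rfl⟩ := hf a; obtain ⟨b, rfl⟩ := hf b
    rw [← map_smul, hbr, hbr, ← map_smul, P.smul_left]
  antisymm a b := by
    obtain ⟨a, rfl⟩ := hf a; obtain ⟨b, rfl⟩ := hf b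
    rw [hbr, hbr, ← map_neg, P.antisymm]
  jacobi a b c := by
    obtain ⟨a, rfl⟩ := hf a; obtain ⟨b, rfl⟩ := hf b; obtain ⟨c, rfl⟩ := hf c
    rw [hbr, hbr, hbr, hbr, hbr, hbr, ← map_add, P.jacobi]
  leibniz a b c := by
    obtain ⟨a, rfl⟩ := hf a; obtain ⟨b, rfl⟩ := hf b; obtain ⟨c, rfl⟩ := hf c
    rw [← map_mul, hbr, hbr, hbr, ← map_mul, ← map_mul, ← map_add, P.leibniz]

end PoissonStructure

section MvHelpers
open MvPolynomial

variable {σ R S : Type*} [CommRing R] [CommRing S]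

/-- total degree of a monomial exponent -/
def mdeg (m : σ →₀ ℕ) : ℕ := m.sum fun _ n => n

lemma mdeg_add (a b : σ →₀ ℕ) : mdeg (a + b) = mdeg a + mdeg b :=
  Finsupp.sum_add_index' (fun _ => rfl) (fun _ _ _ => rfl)

lemma mdeg_pos {m : σ →₀ ℕ} (hm : m ≠ 0) : 0 < mdeg m := by
  obtain ⟨x, hx⟩ := Finsupp.support_nonempty_iff.mpr hm
  have h1 : m x ≤ mdeg m := by
    refine Finset.single_le_sum (f := fun x => m x) (fun _ _ => Nat.zero_le _) hx
  have h2 : 0 < m x := Nat.pos_of_ne_zero (Finsupp.mem_support_iff.mp hx)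
  omega

lemma coeff_pow_eq_zero {d : MvPolynomial σ R} (h : MvPolynomial.coeff 0 d = 0) :
    ∀ k (m : σ →₀ ℕ), mdeg m < k → MvPolynomial.coeff m (d ^ k) = 0 := by
  classical
  intro k
  induction k with
  | zero => intro m hm; omega
  | succ k ih =>
    intro m hm
    rw [pow_succ, MvPolynomial.coeff_mul]
    apply Finset.sum_eq_zero
    rintro ⟨i, j⟩ hij
    rw [Finset.HasAntidiagonal.mem_antidiagonal] at hij
    by_cases hj : j = 0
    · subst hj; rw [h, mul_zero]
    · have h1 : 0 < mdeg j := mdeg_pos hj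
      have h2 : mdeg i + mdeg j = mdeg m := by rw [← mdeg_add, hij]
      rw [ih i (by omega), zero_mul]

lemma idem_is_C (p : MvPolynomial σ R) (hp : p * p = p) :
    p = MvPolynomial.C (MvPolynomial.coeff 0 p) := by
  have hcc : ∀ q : MvPolynomial σ R, MvPolynomial.constantCoeff q = MvPolynomial.coeff 0 q :=
    fun q => congrFun MvPolynomial.constantCoeff_eq q
  set a := MvPolynomial.coeff 0 p with ha_def
  have ha : a * a = a := by
    have := congrArg MvPolynomial.constantCoeff hp
    rw [map_mul, hcc] at this
    exact this
  have hCa : MvPolynomial.C (σ := σ) a * MvPolynomial.C a = MvPolynomial.C a := by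
    rw [← map_mul, ha]
  set d := p - MvPolynomial.C a with hd_def
  have hd0 : MvPolynomial.coeff 0 d = 0 := by
    rw [hd_def, MvPolynomial.coeff_sub, MvPolynomial.coeff_zero_C, ← ha_def, sub_self]
  have hd3 : d * d * d = d := by
    rw [hd_def]
    linear_combination (p + 1 - 3 * MvPolynomial.C a) * hp
      + (3 * p - MvPolynomial.C a - 1) * hCa
  have hodd : ∀ j, d ^ (2 * j + 1) = d := by
    intro j
    induction j with
    | zero => rw [pow_one]
    | succ j ih =>
      have : 2 * (j + 1) + 1 = (2 * j + 1) + 1 + 1 := by omega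
      rw [this, pow_succ, pow_succ, ih, hd3]
  have hd : d = 0 := by
    apply MvPolynomial.ext
    intro m
    rw [MvPolynomial.coeff_zero, ← hodd (mdeg m)]
    exact coeff_pow_eq_zero hd0 _ m (by omega)
  rw [hd_def] at hd
  rw [sub_eq_zero] at hd
  exact hd

end MvHelpers

section MvBr
open MvPolynomial

variable {σ R S : Type*} [CommRing R] [CommRing S]

lemma mvBracketFun_map (f : R →+* S) (brR : R → R → R) (brS : S → S → S)
    (h0 : ∀ y, brS 0 y = 0) (h0' : ∀ x, brS x 0 = 0)
    (hf : ∀ a b, f (brR a b) = brS (f a) (f b)) (p q : MvPolynomial σ R) :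
    MvPolynomial.map f (mvBracketFun brR p q)
      = mvBracketFun brS (MvPolynomial.map f p) (MvPolynomial.map f q) := by
  have lhs : MvPolynomial.map f (mvBracketFun brR p q)
      = ∑ m ∈ p.support, ∑ m' ∈ q.support,
          monomial (m + m') (brS (f (coeff m p)) (f (coeff m' q))) := by
    rw [mvBracketFun, map_sum]
    refine Finset.sum_congr rfl fun m _ => ?_
    rw [map_sum]
    refine Finset.sum_congr rfl fun m' _ => ?_
    rw [map_monomial, hf]
  rw [lhs, mvBracketFun]
  have inner : ∀ m : σ →₀ ℕ,
      (∑ m' ∈ (MvPolynomial.map f q).support,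
        monomial (m + m') (brS (coeff m (MvPolynomial.map f p)) (coeff m' (MvPolynomial.map f q))))
      = ∑ m' ∈ q.support, monomial (m + m') (brS (f (coeff m p)) (f (coeff m' q))) := by
    intro m
    rw [Finset.sum_subset (MvPolynomial.support_map_subset f q)]
    · exact Finset.sum_congr rfl fun m' _ => by rw [coeff_map, coeff_map]
    · intro m' _ hm'
      rw [MvPolynomial.notMem_support_iff.mp hm', h0', map_zero]
  rw [Finset.sum_congr rfl fun m _ => inner m]
  rw [Finset.sum_subset (MvPolynomial.support_map_subset f p)]
  · intro m _ hm
    have : f (coeff m p) = 0 := by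
      rw [← coeff_map, MvPolynomial.notMem_support_iff.mp hm]
    apply Finset.sum_eq_zero
    intro m' _
    rw [this, h0, map_zero]

lemma mvBracketFun_C_C (br : R → R → R) (h0 : ∀ y, br 0 y = 0) (h0' : ∀ x, br x 0 = 0)
    (a b : R) :
    mvBracketFun (σ := σ) br (MvPolynomial.C a) (MvPolynomial.C b)
      = MvPolynomial.C (br a b) := by
  classical
  rw [mvBracketFun]
  by_cases ha : a = 0
  · subst ha
    simp [h0, MvPolynomial.C_0]
  by_cases hb : b = 0
  · subst hb
    simp [h0', MvPolynomial.C_0]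
  have hsa : (MvPolynomial.C a : MvPolynomial σ R).support = {0} := by
    rw [show (MvPolynomial.C a : MvPolynomial σ R) = monomial 0 a from rfl,
      support_monomial, if_neg ha]
  have hsb : (MvPolynomial.C b : MvPolynomial σ R).support = {0} := by
    rw [show (MvPolynomial.C b : MvPolynomial σ R) = monomial 0 b from rfl,
      support_monomial, if_neg hb]
  rw [hsa, hsb, Finset.sum_singleton, Finset.sum_singleton,
    MvPolynomial.coeff_zero_C, MvPolynomial.coeff_zero_C, add_zero, MvPolynomial.C_apply]

lemma mvBracketFun_central (br : R → R → R) (a : R) (hc : ∀ x, br a x = 0)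
    (h0 : ∀ x, br 0 x = 0) (q : MvPolynomial σ R) :
    mvBracketFun (σ := σ) br (MvPolynomial.C a) q = 0 := by
  rw [mvBracketFun]
  apply Finset.sum_eq_zero
  intro m _
  apply Finset.sum_eq_zero
  intro m' _
  classical
  rw [MvPolynomial.coeff_C]
  split
  · rw [hc, map_zero]
  · rw [h0, map_zero]

lemma ker_mapAlgHom_eq_span {k A' D : Type*} [CommRing k] [CommRing A'] [Algebra k A']
    [CommRing D] [Algebra k D] (π : A' →ₐ[k] D) (ζ : A') (hζ : π ζ = 0)
    (hζ' : ∀ x, π x = 0 → ζ * x = x) :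
    RingHom.ker (MvPolynomial.mapAlgHom (σ := σ) π)
      = Ideal.span {MvPolynomial.C ζ} := by
  have hmap : ∀ r : MvPolynomial σ A',
      MvPolynomial.mapAlgHom (σ := σ) π r = MvPolynomial.map (π : A' →+* D) r := fun _ => rfl
  ext p
  rw [RingHom.mem_ker, Ideal.mem_span_singleton]
  constructor
  · intro hp
    refine ⟨p, ?_⟩
    apply MvPolynomial.ext
    intro m
    rw [coeff_C_mul]
    refine (hζ' _ ?_).symm
    have : coeff m (MvPolynomial.mapAlgHom (σ := σ) π p) = 0 := by rw [hp]; rfl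
    rwa [hmap, coeff_map] at this
  · rintro ⟨t, rfl⟩
    rw [map_mul]
    have : MvPolynomial.mapAlgHom (σ := σ) π (MvPolynomial.C ζ) = 0 := by
      rw [hmap, MvPolynomial.map_C, show (π : A' →+* D) ζ = 0 from hζ, MvPolynomial.C_0]
    rw [this, zero_mul]

end MvBr

section Quot

variable {k C : Type u} [CommRing k] [CommRing C] [Algebra k C]

/-- bracket induced on a quotient, via choice of representatives -/
noncomputable def qbr (br : C → C → C) (I : Ideal C) : C ⧸ I → C ⧸ I → C ⧸ I :=
  fun x y => Ideal.Quotient.mk I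
    (br (Function.surjInv Ideal.Quotient.mk_surjective x)
        (Function.surjInv Ideal.Quotient.mk_surjective y))

lemma qbr_mk (R : PoissonStructure k C) (I : Ideal C)
    (hst : ∀ c x, x ∈ I → R.bracket c x ∈ I) (c d : C) :
    qbr R.bracket I (Ideal.Quotient.mk I c) (Ideal.Quotient.mk I d)
      = Ideal.Quotient.mk I (R.bracket c d) := by
  set c₀ := Function.surjInv (Ideal.Quotient.mk_surjective (I := I))
    (Ideal.Quotient.mk I c) with hc₀_def
  set d₀ := Function.surjInv (Ideal.Quotient.mk_surjective (I := I))
    (Ideal.Quotient.mk I d) with hd₀_def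
  have hc₀ : Ideal.Quotient.mk I c₀ = Ideal.Quotient.mk I c :=
    Function.surjInv_eq Ideal.Quotient.mk_surjective _
  have hd₀ : Ideal.Quotient.mk I d₀ = Ideal.Quotient.mk I d :=
    Function.surjInv_eq Ideal.Quotient.mk_surjective _
  have h1 : c₀ - c ∈ I := Ideal.Quotient.eq.mp hc₀
  have h2 : d₀ - d ∈ I := Ideal.Quotient.eq.mp hd₀
  show Ideal.Quotient.mk I (R.bracket c₀ d₀) = Ideal.Quotient.mk I (R.bracket c d)
  rw [Ideal.Quotient.eq]
  have key : R.bracket c₀ d₀ - R.bracket c d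
      = R.bracket (c₀ - c) d₀ + R.bracket c (d₀ - d) := by
    rw [R.sub_left, R.sub_right]; ring
  rw [key]
  apply I.add_mem
  · rw [R.antisymm]
    exact I.neg_mem (hst _ _ h1)
  · exact hst _ _ h2

lemma span_stab (R : PoissonStructure k C) (w : C) (hwc : ∀ c, R.bracket w c = 0) :
    ∀ c x, x ∈ Ideal.span {w} → R.bracket c x ∈ Ideal.span {w} := by
  intro c x hx
  obtain ⟨t, rfl⟩ := Ideal.mem_span_singleton.mp hx
  have hcw : R.bracket c w = 0 := by rw [R.antisymm, hwc, neg_zero]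
  rw [R.leibniz, hcw, zero_mul, zero_add]
  exact Ideal.mem_span_singleton.mpr ⟨_, rfl⟩

/-- CRT decomposition of `C` along an idempotent. -/
noncomputable def crtEquiv (k : Type u) [CommRing k] (C : Type u) [CommRing C] [Algebra k C]
    (u : C) (hu : u * u = u) :
    C ≃ₐ[k] (C ⧸ Ideal.span {1 - u}) × (C ⧸ Ideal.span {u}) := by
  refine AlgEquiv.ofBijective
    ((Ideal.Quotient.mkₐ k (Ideal.span {1 - u})).prod (Ideal.Quotient.mkₐ k (Ideal.span {u})))
    ⟨(injective_iff_map_eq_zero _).mpr ?_, ?_⟩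
  · intro c hc
    rw [AlgHom.prod_apply, Prod.mk_eq_zero] at hc
    obtain ⟨hc1, hc2⟩ := hc
    have m1 : c ∈ Ideal.span {1 - u} := by
      rwa [← Ideal.Quotient.eq_zero_iff_mem, ← Ideal.Quotient.mkₐ_eq_mk k]
    have m2 : c ∈ Ideal.span {u} := by
      rwa [← Ideal.Quotient.eq_zero_iff_mem, ← Ideal.Quotient.mkₐ_eq_mk k]
    obtain ⟨s, hs⟩ := Ideal.mem_span_singleton.mp m1
    obtain ⟨t, ht⟩ := Ideal.mem_span_singleton.mp m2
    linear_combination u * hs + (1 - u) * ht - (s + t) * hu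
  · rintro ⟨x, y⟩
    obtain ⟨c, rfl⟩ := Ideal.Quotient.mk_surjective x
    obtain ⟨d, rfl⟩ := Ideal.Quotient.mk_surjective y
    refine ⟨c * u + d * (1 - u), ?_⟩
    rw [AlgHom.prod_apply, Prod.mk.injEq]
    constructor
    · rw [Ideal.Quotient.mkₐ_eq_mk, Ideal.Quotient.eq]
      exact Ideal.mem_span_singleton.mpr ⟨d - c, by ring⟩
    · rw [Ideal.Quotient.mkₐ_eq_mk, Ideal.Quotient.eq]
      exact Ideal.mem_span_singleton.mpr ⟨c - d, by ring⟩

end Quot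

/-- product of algebra equivalences -/
def algEquivProdCongr {k A A' B B' : Type*} [CommRing k] [CommRing A] [CommRing A']
    [CommRing B] [CommRing B'] [Algebra k A] [Algebra k A'] [Algebra k B] [Algebra k B']
    (f : A ≃ₐ[k] A') (g : B ≃ₐ[k] B') : (A × B) ≃ₐ[k] A' × B' :=
  AlgEquiv.ofAlgHom
    ((f.toAlgHom.comp (AlgHom.fst k A B)).prod (g.toAlgHom.comp (AlgHom.snd k A B)))
    ((f.symm.toAlgHom.comp (AlgHom.fst k A' B')).prod (g.symm.toAlgHom.comp (AlgHom.snd k A' B')))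
    (AlgHom.ext fun x => by
      show (f (f.symm x.1), g (g.symm x.2)) = x
      rw [AlgEquiv.apply_symm_apply, AlgEquiv.apply_symm_apply])
    (AlgHom.ext fun x => by
      show (f.symm (f x.1), g.symm (g x.2)) = x
      rw [AlgEquiv.symm_apply_apply, AlgEquiv.symm_apply_apply])

lemma algEquivProdCongr_apply {k A A' B B' : Type*} [CommRing k] [CommRing A] [CommRing A']
    [CommRing B] [CommRing B'] [Algebra k A] [Algebra k A'] [Algebra k B] [Algebra k B']
    (f : A ≃ₐ[k] A') (g : B ≃ₐ[k] B') (x : A × B) :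
    algEquivProdCongr f g x = (f x.1, g x.2) := rfl

/-- Poisson cancellation at level `n`: any Poisson isomorphism
`A[t₁,...,tₙ] ≅ B[s₁,...,sₙ]` (variables Poisson central) yields `A ≅ B`. -/
def PoissonCancellativeAt {k : Type*} {A : Type u} [CommRing k] [CommRing A] [Algebra k A]
    (P : PoissonStructure k A) (n : ℕ) : Prop :=
  ∀ (B : Type u) (_ : CommRing B) (_ : Algebra k B) (Q : PoissonStructure k B)
    (PP : PoissonStructure k (MvPolynomial (Fin n) A))
    (QQ : PoissonStructure k (MvPolynomial (Fin n) B)),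
    (∀ p q, PP.bracket p q = mvBracketFun P.bracket p q) →
    (∀ p q, QQ.bracket p q = mvBracketFun Q.bracket p q) →
    (∃ e : MvPolynomial (Fin n) A ≃ₐ[k] MvPolynomial (Fin n) B,
      ∀ p q, e (PP.bracket p q) = QQ.bracket (e p) (e q)) →
    ∃ f : A ≃ₐ[k] B, ∀ a b, f (P.bracket a b) = Q.bracket (f a) (f b)

section Half

variable {k A B : Type u} [CommRing k] [CommRing A] [Algebra k A] [CommRing B] [Algebra k B]

lemma half (PQ : PoissonStructure k (A × B)) {n : ℕ}
    {C : Type u} [CommRing C] [Algebra k C] (R : PoissonStructure k C)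
    (PP : PoissonStructure k (MvPolynomial (Fin n) (A × B)))
    (QQ : PoissonStructure k (MvPolynomial (Fin n) C))
    (hPP : ∀ p q, PP.bracket p q = mvBracketFun PQ.bracket p q)
    (hQQ : ∀ p q, QQ.bracket p q = mvBracketFun R.bracket p q)
    (e : MvPolynomial (Fin n) (A × B) ≃ₐ[k] MvPolynomial (Fin n) C)
    (he : ∀ p q, e (PP.bracket p q) = QQ.bracket (e p) (e q))
    {D : Type u} [CommRing D] [Algebra k D] (PD : PoissonStructure k D)
    (π : (A × B) →ₐ[k] D) (hπs : Function.Surjective π)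
    (hπbr : ∀ x y, PD.bracket (π x) (π y) = π (PQ.bracket x y))
    (ζ : A × B) (hζ0 : π ζ = 0) (hζ' : ∀ x, π x = 0 → ζ * x = x)
    (w : C) (hw : w * w = w) (hwc : ∀ c, R.bracket w c = 0)
    (hew : e (MvPolynomial.C ζ) = MvPolynomial.C w)
    (hD : PoissonCancellativeAt PD n) :
    ∃ g : D ≃ₐ[k] (C ⧸ Ideal.span {w}),
      ∀ x y, g (PD.bracket x y) = qbr R.bracket (Ideal.span {w}) (g x) (g y) := by
  set J : Ideal C := Ideal.span {w} with hJ_def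
  set mkq : C →ₐ[k] C ⧸ J := Ideal.Quotient.mkₐ k J with hmkq_def
  have hmks : Function.Surjective mkq := Ideal.Quotient.mkₐ_surjective k J
  have hst := span_stab R w hwc
  have hqmk : ∀ c d, qbr R.bracket J (mkq c) (mkq d) = mkq (R.bracket c d) :=
    fun c d => qbr_mk R J hst c d
  let RJ : PoissonStructure k (C ⧸ J) := R.pushforward mkq hmks (qbr R.bracket J) hqmk
  -- polynomial-level maps
  set πP : MvPolynomial (Fin n) (A × B) →ₐ[k] MvPolynomial (Fin n) D :=
    MvPolynomial.mapAlgHom π with hπP_def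
  have hπPd : ∀ p, πP p = MvPolynomial.map (π : (A × B) →+* D) p := fun _ => rfl
  have hπPs : Function.Surjective πP := fun p => by
    obtain ⟨q, hq⟩ := MvPolynomial.map_surjective (π : (A × B) →+* D) hπs p
    exact ⟨q, by rw [hπPd, hq]⟩
  set πC : MvPolynomial (Fin n) C →ₐ[k] MvPolynomial (Fin n) (C ⧸ J) :=
    MvPolynomial.mapAlgHom mkq with hπC_def
  have hπCd : ∀ p, πC p = MvPolynomial.map (mkq : C →+* C ⧸ J) p := fun _ => rfl
  have hπCs : Function.Surjective πC := fun p => by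
    obtain ⟨q, hq⟩ := MvPolynomial.map_surjective (mkq : C →+* C ⧸ J) hmks p
    exact ⟨q, by rw [hπCd, hq]⟩
  -- bracket compatibilities
  have h0q : ∀ y, qbr R.bracket J 0 y = 0 := by
    intro y
    obtain ⟨d, rfl⟩ := hmks y
    rw [show (0 : C ⧸ J) = mkq 0 from (map_zero mkq).symm, hqmk, R.zero_left, map_zero]
  have h0q' : ∀ x, qbr R.bracket J x 0 = 0 := by
    intro x
    obtain ⟨c, rfl⟩ := hmks x
    rw [show (0 : C ⧸ J) = mkq 0 from (map_zero mkq).symm, hqmk, R.zero_right, map_zero]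
  have hbrP : ∀ p q, mvBracketFun PD.bracket (πP p) (πP q) = πP (PP.bracket p q) := by
    intro p q
    rw [hPP, hπPd, hπPd, hπPd]
    exact (mvBracketFun_map (π : (A × B) →+* D) PQ.bracket PD.bracket PD.zero_left
      PD.zero_right (fun a b => (hπbr a b).symm) p q).symm
  have hbrC : ∀ p q, mvBracketFun (qbr R.bracket J) (πC p) (πC q) = πC (QQ.bracket p q) := by
    intro p q
    rw [hQQ, hπCd, hπCd, hπCd]
    exact (mvBracketFun_map (mkq : C →+* C ⧸ J) R.bracket (qbr R.bracket J) h0q h0q'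
      (fun a b => (hqmk a b).symm) p q).symm
  -- kernels
  have hKP : RingHom.ker πP = Ideal.span {MvPolynomial.C ζ} :=
    ker_mapAlgHom_eq_span π ζ hζ0 hζ'
  have hwq : mkq w = 0 :=
    Ideal.Quotient.eq_zero_iff_mem.mpr (Ideal.subset_span (Set.mem_singleton w))
  have hwq' : ∀ x, mkq x = 0 → w * x = x := by
    intro x hx
    have : x ∈ J := Ideal.Quotient.eq_zero_iff_mem.mp hx
    obtain ⟨t, rfl⟩ := Ideal.mem_span_singleton.mp this
    rw [← mul_assoc, hw]
  have hKC : RingHom.ker πC = Ideal.span {MvPolynomial.C w} :=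
    ker_mapAlgHom_eq_span mkq w hwq hwq'
  have hmapI : Ideal.map (e : MvPolynomial (Fin n) (A × B) →+* MvPolynomial (Fin n) C)
      (RingHom.ker πP) = RingHom.ker πC := by
    rw [hKP, hKC, Ideal.map_span, Set.image_singleton]
    congr 1
    rw [show (e : MvPolynomial (Fin n) (A × B) →+* MvPolynomial (Fin n) C)
      (MvPolynomial.C ζ) = e (MvPolynomial.C ζ) from rfl, hew]
  -- the induced equivalence on polynomial rings
  let q1 := Ideal.quotientKerAlgEquivOfSurjective hπPs
  let q2 := Ideal.quotientEquivAlg (RingHom.ker πP)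
    (Ideal.map (e : MvPolynomial (Fin n) (A × B) →+* MvPolynomial (Fin n) C) (RingHom.ker πP))
    e rfl
  let q3 := Ideal.quotientEquivAlgOfEq k hmapI
  let q4 := Ideal.quotientKerAlgEquivOfSurjective hπCs
  let ebar := ((q1.symm.trans q2).trans q3).trans q4
  have hq1 : ∀ p, q1 (Ideal.Quotient.mk (RingHom.ker πP) p) = πP p := fun p => rfl
  have hq2 : ∀ p, q2 (Ideal.Quotient.mk (RingHom.ker πP) p) = Ideal.Quotient.mk _ (e p) :=
    fun p => rfl
  have hq3 : ∀ p, q3 (Ideal.Quotient.mk _ p) = Ideal.Quotient.mk (RingHom.ker πC) p :=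
    fun p => rfl
  have hq4 : ∀ p, q4 (Ideal.Quotient.mk (RingHom.ker πC) p) = πC p := fun p => rfl
  have hcomm : ∀ p, ebar (πP p) = πC (e p) := by
    intro p
    have h1 : q1.symm (πP p) = Ideal.Quotient.mk (RingHom.ker πP) p := by
      apply q1.injective
      rw [AlgEquiv.apply_symm_apply, hq1]
    show q4 (q3 (q2 (q1.symm (πP p)))) = πC (e p)
    rw [h1, hq2, hq3, hq4]
  -- transported Poisson structures on polynomial rings
  let PP' : PoissonStructure k (MvPolynomial (Fin n) D) :=
    PP.pushforward πP hπPs (mvBracketFun PD.bracket) hbrP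
  let QQ' : PoissonStructure k (MvPolynomial (Fin n) (C ⧸ J)) :=
    QQ.pushforward πC hπCs (mvBracketFun (qbr R.bracket J)) hbrC
  have pres : ∀ p q, ebar (PP'.bracket p q) = QQ'.bracket (ebar p) (ebar q) := by
    intro p q
    obtain ⟨p, rfl⟩ := hπPs p
    obtain ⟨q, rfl⟩ := hπPs q
    show ebar (mvBracketFun PD.bracket (πP p) (πP q))
      = mvBracketFun (qbr R.bracket J) (ebar (πP p)) (ebar (πP q))
    rw [hbrP, hcomm, he, hcomm, hcomm, hbrC]
  obtain ⟨g, hg⟩ := hD (C ⧸ J) _ _ RJ PP' QQ' (fun _ _ => rfl) (fun _ _ => rfl) ⟨ebar, pres⟩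
  exact ⟨g, hg⟩

end Half


/-- The direct sum of two (strongly) Poisson cancellative Poisson algebras is (strongly)
Poisson cancellative. -/
theorem prod_poissonCancellative {k : Type u} {A B : Type u} [CommRing k]
    [CommRing A] [Algebra k A] [CommRing B] [Algebra k B]
    (P : PoissonStructure k A) (Q : PoissonStructure k B)
    (PQ : PoissonStructure k (A × B))
    (hPQ : ∀ x y : A × B, PQ.bracket x y = (P.bracket x.1 y.1, Q.bracket x.2 y.2)) :
    ((PoissonCancellativeAt P 1 ∧ PoissonCancellativeAt Q 1) → PoissonCancellativeAt PQ 1) ∧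
    (((∀ n, 1 ≤ n → PoissonCancellativeAt P n) ∧ (∀ n, 1 ≤ n → PoissonCancellativeAt Q n)) →
      ∀ n, 1 ≤ n → PoissonCancellativeAt PQ n) := by
  have main : ∀ n, PoissonCancellativeAt P n → PoissonCancellativeAt Q n →
      PoissonCancellativeAt PQ n := by
    intro n hA hB
    intro Ct instCt instAt R PP QQ hPP hQQ hE
    obtain ⟨e, he⟩ := hE
    -- the image of the idempotent (1,0) is a constant idempotent
    have hPQ1 : ∀ x : A × B, PQ.bracket ((1 : A), (0 : B)) x = 0 := by
      intro x
      rw [hPQ]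
      show ((P.bracket 1 x.1, Q.bracket 0 x.2) : A × B) = 0
      rw [P.one_left, Q.zero_left]
      rfl
    have hidem : e (MvPolynomial.C ((1 : A), (0 : B))) * e (MvPolynomial.C ((1 : A), (0 : B)))
        = e (MvPolynomial.C ((1 : A), (0 : B))) := by
      rw [← map_mul, ← map_mul]
      congr 2
      simp [Prod.mk_mul_mk]
    set u := MvPolynomial.coeff 0 (e (MvPolynomial.C ((1 : A), (0 : B)))) with hu_def
    have heu : e (MvPolynomial.C ((1 : A), (0 : B))) = MvPolynomial.C u := idem_is_C _ hidem
    have hu : u * u = u := by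
      apply MvPolynomial.C_injective (Fin n) Ct
      rw [map_mul, ← heu, ← map_mul]
      rw [show (MvPolynomial.C ((1 : A), (0 : B)) * MvPolynomial.C ((1 : A), (0 : B))
        : MvPolynomial (Fin n) (A × B)) = MvPolynomial.C ((1 : A), (0 : B)) by
          rw [← map_mul]; congr 1; simp [Prod.mk_mul_mk], heu]
    -- Poisson centrality of u
    have hPPz : ∀ p, PP.bracket (MvPolynomial.C ((1 : A), (0 : B))) p = 0 := by
      intro p
      rw [hPP]
      exact mvBracketFun_central PQ.bracket _ hPQ1 PQ.zero_left p
    have hQQz : ∀ q, QQ.bracket (MvPolynomial.C u) q = 0 := by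
      intro q
      obtain ⟨p, rfl⟩ := e.surjective q
      rw [← heu, ← he, hPPz, map_zero]
    have hcent : ∀ c, R.bracket u c = 0 := by
      intro c
      have h := hQQz (MvPolynomial.C c)
      rw [hQQ, mvBracketFun_C_C R.bracket R.zero_left R.zero_right] at h
      exact MvPolynomial.C_injective (Fin n) Ct (h.trans MvPolynomial.C_0.symm)
    have hcent' : ∀ c, R.bracket (1 - u) c = 0 := by
      intro c
      rw [R.sub_left, R.one_left, hcent, sub_zero]
    have hw1 : (1 - u) * (1 - u) = 1 - u := by linear_combination hu
    -- the A-side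
    have hπbrA : ∀ x y : A × B, P.bracket ((AlgHom.fst k A B) x) ((AlgHom.fst k A B) y)
        = (AlgHom.fst k A B) (PQ.bracket x y) := by
      intro x y
      rw [hPQ]
      rfl
    have hζA' : ∀ x : A × B, (AlgHom.fst k A B) x = 0 → ((0 : A), (1 : B)) * x = x := by
      intro x hx
      rw [Prod.ext_iff]
      constructor
      · show (0 : A) * x.1 = x.1
        rw [zero_mul]
        exact hx.symm
      · show (1 : B) * x.2 = x.2
        rw [one_mul]
    have h01 : (MvPolynomial.C ((0 : A), (1 : B)) : MvPolynomial (Fin n) (A × B))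
        = 1 - MvPolynomial.C ((1 : A), (0 : B)) := by
      rw [← MvPolynomial.C_1, ← map_sub]
      congr 1
      exact Prod.ext_iff.mpr ⟨by simp, by simp⟩
    have hewA : e (MvPolynomial.C ((0 : A), (1 : B))) = MvPolynomial.C (1 - u) := by
      rw [h01, map_sub, map_one, heu, map_sub, MvPolynomial.C_1]
    obtain ⟨g₁, hg₁⟩ := half PQ R PP QQ hPP hQQ e he P (AlgHom.fst k A B)
      (fun d => ⟨(d, 0), rfl⟩) hπbrA ((0 : A), (1 : B)) rfl hζA' (1 - u) hw1 hcent' hewA hA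
    -- the B-side
    have hπbrB : ∀ x y : A × B, Q.bracket ((AlgHom.snd k A B) x) ((AlgHom.snd k A B) y)
        = (AlgHom.snd k A B) (PQ.bracket x y) := by
      intro x y
      rw [hPQ]
      rfl
    have hζB' : ∀ x : A × B, (AlgHom.snd k A B) x = 0 → ((1 : A), (0 : B)) * x = x := by
      intro x hx
      rw [Prod.ext_iff]
      constructor
      · show (1 : A) * x.1 = x.1
        rw [one_mul]
      · show (0 : B) * x.2 = x.2
        rw [zero_mul]
        exact hx.symm
    obtain ⟨g₂, hg₂⟩ := half PQ R PP QQ hPP hQQ e he Q (AlgHom.snd k A B)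
      (fun d => ⟨(0, d), rfl⟩) hπbrB ((1 : A), (0 : B)) rfl hζB' u hu hcent heu hB
    -- assemble
    let crt := crtEquiv k Ct u hu
    refine ⟨(algEquivProdCongr g₁ g₂).trans crt.symm, ?_⟩
    intro x y
    set f := (algEquivProdCongr g₁ g₂).trans crt.symm with hf_def
    have hfapp : ∀ z : A × B, crt (f z) = (g₁ z.1, g₂ z.2) := by
      intro z
      show crt (crt.symm (algEquivProdCongr g₁ g₂ z)) = _
      rw [AlgEquiv.apply_symm_apply, algEquivProdCongr_apply]
    have hcrt : ∀ c : Ct, crt c = (Ideal.Quotient.mk (Ideal.span {1 - u}) c,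
        Ideal.Quotient.mk (Ideal.span {u}) c) := fun c => rfl
    apply crt.injective
    rw [hfapp, hcrt (R.bracket (f x) (f y))]
    have h1x : Ideal.Quotient.mk (Ideal.span {1 - u}) (f x) = g₁ x.1 :=
      congrArg Prod.fst ((hcrt (f x)).symm.trans (hfapp x))
    have h1y : Ideal.Quotient.mk (Ideal.span {1 - u}) (f y) = g₁ y.1 :=
      congrArg Prod.fst ((hcrt (f y)).symm.trans (hfapp y))
    have h2x : Ideal.Quotient.mk (Ideal.span {u}) (f x) = g₂ x.2 :=
      congrArg Prod.snd ((hcrt (f x)).symm.trans (hfapp x))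
    have h2y : Ideal.Quotient.mk (Ideal.span {u}) (f y) = g₂ y.2 :=
      congrArg Prod.snd ((hcrt (f y)).symm.trans (hfapp y))
    rw [Prod.ext_iff]
    constructor
    · show g₁ ((PQ.bracket x y).1) = Ideal.Quotient.mk (Ideal.span {1 - u}) (R.bracket (f x) (f y))
      rw [hPQ]
      show g₁ (P.bracket x.1 y.1) = _
      rw [hg₁, ← h1x, ← h1y, qbr_mk R _ (span_stab R (1 - u) hcent')]
    · show g₂ ((PQ.bracket x y).2) = Ideal.Quotient.mk (Ideal.span {u}) (R.bracket (f x) (f y))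
      rw [hPQ]
      show g₂ (Q.bracket x.2 y.2) = _
      rw [hg₂, ← h2x, ← h2y, qbr_mk R _ (span_stab R u hcent)]
  exact ⟨fun h => main 1 h.1 h.2, fun h n hn => main n (h.1 n hn) (h.2 n hn)⟩
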